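/- In a comical set X, the homotopy relation on 1-cubes with fixed endpoints x, y (defined by existence of a marked 2-cube with boundary f on one face, g on the parallel face, and degenerate 1-cubes on the remaining two faces) is an equivalence relation. -/

import Mathlib

/-!
Write `Homotopic₁` and `Homotopic₂` for homotopies whose pair of parallel edges is the `∂₁` pair,
respectively the `∂₂` pair. Both are reflexive via degeneracies. The key step is a Euclidean
property: witnesses of `a ~ b` and `a ~ c` become the two `∂₃` faces of a comical open box in
dimension three, whose other faces are the degeneracy `σ₂ a` and the constant squares at the
endpoints of `a`. The missing face of a filler is marked, and it is a `Homotopic₂` witness from `b`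
to `c`. Euclidean and reflexive give symmetric and transitive, and each configuration allowed in
`Homotopic` converts to `Homotopic₂`.

Checking the comical marking of the box needs that images of non-injective box maps are marked:
every box map is a composite of faces after degeneracies and connections, so a non-injective one
factors through a degeneracy or a connection.
-/

/-- The poset `[1]^n = {0 ≤ 1}^n`, modeled as functions `Fin n → Bool`. -/
def Cube (n : ℕ) : Type := Fin n → Bool

/-- The face map `∂_{i,ε} : [1]^n → [1]^(n+1)` inserting `ε` at position `i` (0-based). -/
def face {n : ℕ} (i : Fin (n + 1)) (ε : Bool) (x : Cube n) : Cube (n + 1) :=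
  Fin.insertNth i ε x

/-- The degeneracy `σ_i : [1]^(n+1) → [1]^n` deleting coordinate `i` (0-based). -/
def degen {n : ℕ} (i : Fin (n + 1)) (x : Cube (n + 1)) : Cube n :=
  fun j => x (i.succAbove j)

/-- The connection `γ_{i,ε} : [1]^(n+2) → [1]^(n+1)` merging coordinates `i` and `i+1`
(0-based), using `max` when `ε = true` and `min` when `ε = false`. -/
def conn {n : ℕ} (i : Fin (n + 1)) (ε : Bool) (x : Cube (n + 2)) : Cube (n + 1) :=
  fun j =>
    if j.val < i.val then x j.castSucc
    else if j.val = i.val then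
      (if ε then x i.castSucc || x i.succ else x i.castSucc && x i.succ)
    else x j.succ

/-- The predicate on functions `[1]^m → [1]^n` of being a morphism of the box category `□`,
i.e. a composite of faces, degeneracies and connections. -/
inductive IsBoxMap : {m n : ℕ} → (Cube m → Cube n) → Prop
  | id {n : ℕ} : IsBoxMap (fun x : Cube n => x)
  | face {n : ℕ} (i : Fin (n + 1)) (ε : Bool) : IsBoxMap (face i ε)
  | degen {n : ℕ} (i : Fin (n + 1)) : IsBoxMap (degen i)
  | conn {n : ℕ} (i : Fin (n + 1)) (ε : Bool) : IsBoxMap (conn i ε)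
  | comp {m n k : ℕ} {f : Cube m → Cube n} {g : Cube n → Cube k} :
      IsBoxMap f → IsBoxMap g → IsBoxMap (g ∘ f)

/-- The face map with 1-based index `p` (as in the paper); out-of-range indices are clamped. -/
def face1 {n : ℕ} (p : ℕ) (ε : Bool) : Cube n → Cube (n + 1) :=
  face ⟨min (p - 1) n, by omega⟩ ε

/-- The degeneracy with 1-based index `p`; out-of-range indices are clamped. -/
def degen1 {n : ℕ} (p : ℕ) : Cube (n + 1) → Cube n :=
  degen ⟨min (p - 1) n, by omega⟩

/-- The connection with 1-based index `p`; out-of-range indices are clamped. -/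
def conn1 {n : ℕ} (p : ℕ) (ε : Bool) : Cube (n + 2) → Cube (n + 1) :=
  conn ⟨min (p - 1) n, by omega⟩ ε

theorem face1_isBoxMap {n : ℕ} (p : ℕ) (ε : Bool) : IsBoxMap (face1 (n := n) p ε) :=
  IsBoxMap.face _ _

theorem degen1_isBoxMap {n : ℕ} (p : ℕ) : IsBoxMap (degen1 (n := n) p) :=
  IsBoxMap.degen _

/-- Transport a cube along an equality of dimensions. -/
def cubeCast {m n : ℕ} (h : m = n) (x : Cube m) : Cube n := fun j => x (Fin.cast h.symm j)

/-- The composite `σ_{i_1} ⋯ σ_{i_r}` of degeneracies (1-based indices, the head of the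
list being the outermost, i.e. last applied, degeneracy), as a map `[1]^{n+r} → [1]^n`. -/
def sigmaWord : (l : List ℕ) → {n : ℕ} → Cube (n + l.length) → Cube n
  | [], _, x => x
  | p :: l, n, x => degen1 p (sigmaWord l (n := n + 1) (cubeCast (by simp only [List.length_cons]; omega) x))

/-- Validity of the 1-based indices in a word of degeneracies with codomain `[1]^n`. -/
def sigmaValid : List ℕ → ℕ → Prop
  | [], _ => True
  | p :: l, n => 1 ≤ p ∧ p ≤ n + 1 ∧ sigmaValid l (n + 1)

/-- The composite `γ_{j_1,δ_1} ⋯ γ_{j_s,δ_s}` of connections (1-based indices, head of the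
list outermost), as a map `[1]^{n+s} → [1]^n`. -/
def gammaWord : (l : List (ℕ × Bool)) → {n : ℕ} → Cube (n + l.length) → Cube n
  | [], _, x => x
  | (p, ε) :: l, n + 1, x => conn1 p ε (gammaWord l (n := n + 2) (cubeCast (by simp only [List.length_cons]; omega) x))
  | _ :: _, 0, _ => fun _ => false

/-- Validity of the 1-based indices in a word of connections with codomain `[1]^n`. -/
def gammaValid : List (ℕ × Bool) → ℕ → Prop
  | [], _ => True
  | (p, _) :: l, n => 1 ≤ p ∧ p ≤ n ∧ gammaValid l (n + 1)

/-- The composite `∂_{k_1,ε_1} ⋯ ∂_{k_t,ε_t}` of faces (1-based indices, head of the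
list outermost), as a map `[1]^n → [1]^{n+t}`. -/
def deltaWord : (l : List (ℕ × Bool)) → {n : ℕ} → Cube n → Cube (n + l.length)
  | [], _, x => x
  | (p, ε) :: l, n, x => cubeCast (by simp only [List.length_cons]; omega) (face1 p ε (deltaWord l x))

/-- Validity of the 1-based indices in a word of faces with domain `[1]^n`. -/
def deltaValid : List (ℕ × Bool) → ℕ → Prop
  | [], _ => True
  | (p, _) :: l, n => 1 ≤ p ∧ p ≤ n + l.length + 1 ∧ deltaValid l n

/-- A marked cubical set: a presheaf on the box category `□` (presented by functions between
cubes that are composites of the generating operators) together with, for each `n`, a set of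
marked `n`-cubes containing all degenerate cubes (images of degeneracies and connections),
with no marked `0`-cubes. -/
structure MCSet where
  obj : ℕ → Type
  map : ∀ {m n : ℕ} (f : Cube m → Cube n), IsBoxMap f → obj n → obj m
  map_id : ∀ (n : ℕ) (x : obj n), map (fun y => y) IsBoxMap.id x = x
  map_comp : ∀ {m n k : ℕ} (f : Cube m → Cube n) (hf : IsBoxMap f)
      (g : Cube n → Cube k) (hg : IsBoxMap g) (x : obj k),
      map (g ∘ f) (IsBoxMap.comp hf hg) x = map f hf (map g hg x)
  marked : ∀ {n : ℕ}, obj n → Prop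
  marked_degen : ∀ {n : ℕ} (i : Fin (n + 1)) (x : obj n),
      marked (map (degen i) (IsBoxMap.degen i) x)
  marked_conn : ∀ {n : ℕ} (i : Fin (n + 1)) (ε : Bool) (x : obj (n + 1)),
      marked (map (conn i ε) (IsBoxMap.conn i ε) x)
  not_marked_zero : ∀ x : obj 0, ¬ marked x

/-- The four faces `∂_{k-1,ε}`, `∂_{k,ε}`, `∂_{k,1-ε}`, `∂_{k+1,ε}` (1-based indices)
which must not occur in the normal form of a marked face of the comical cube `□ⁿ_{k,ε}`. -/
def avoidSet (k : ℕ) (ε : Bool) : Set (ℕ × Bool) :=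
  {(k - 1, ε), (k, ε), (k, !ε), (k + 1, ε)}

/-- The marking of the comical cube `□ⁿ_{k,ε}` (1-based `k`): an `m`-cube `f : [1]^m → [1]^n`
of the representable cubical set `□ⁿ` is marked iff it is degenerate (non-injective), or its
normal form `∂_{k_1,ε_1} ⋯ ∂_{k_t,ε_t}` (with `k_1 > ⋯ > k_t ≥ 1`) contains none of
`∂_{k-1,ε}`, `∂_{k,ε}`, `∂_{k,1-ε}`, `∂_{k+1,ε}`. -/
def ComicallyMarked (n k : ℕ) (ε : Bool) {m : ℕ} (f : Cube m → Cube n) : Prop :=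
  (¬ Function.Injective f) ∨
  ∃ (ld : List (ℕ × Bool)) (h : n = m + ld.length),
    deltaValid ld m ∧ (ld.map Prod.fst).Chain' (· > ·) ∧
    (∀ pr ∈ ld, pr ∉ avoidSet k ε) ∧
    (∀ x : Cube m, f x = cubeCast h.symm (deltaWord ld x))

/-- Membership in the `(k,ε)`-open box `⊓ⁿ⁺¹_{k,ε} ⊆ □ⁿ⁺¹` (1-based `k`):
an `m`-cube `f` of the representable `□ⁿ⁺¹` lies in the open box iff it factors through
some face `∂_{j,δ}` with `(j,δ) ≠ (k,ε)`. -/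
def InBox (n k : ℕ) (ε : Bool) {m : ℕ} (f : Cube m → Cube (n + 1)) : Prop :=
  ∃ (j : ℕ) (δ : Bool) (g : Cube m → Cube n), IsBoxMap g ∧
    1 ≤ j ∧ j ≤ n + 1 ∧ (j, δ) ≠ (k, ε) ∧ f = (face1 j δ) ∘ g

/-- A comical set: a marked cubical set with the right lifting property with respect to all
comical open box inclusions and all elementary comical marking extensions.

The lifting property against the open box inclusion `⊓ⁿ⁺¹_{k,ε} ↪ □ⁿ⁺¹_{k,ε}` is expressed
via the Yoneda lemma: every marking-respecting compatible family indexed by the cubes of the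
open box extends to a marked `(n+1)`-cube inducing it.

The lifting property against the elementary comical marking extension is likewise expressed
via Yoneda: any `(n+1)`-cube `x` all of whose structure cubes which are marked in
`□ⁿ⁺¹_{k,ε} ∪_{⊓} τ_{n-1}⊓ⁿ⁺¹_{k,ε}` (i.e. comically marked cubes, together with the cubes
of the open box of dimension ≥ n) are marked in `X`, also has marked `(k,ε)`-face. -/
structure IsComical (X : MCSet) : Prop where
  fill : ∀ (n k : ℕ) (ε : Bool), 1 ≤ k → k ≤ n + 1 →
    ∀ (b : ∀ {m : ℕ} (f : Cube m → Cube (n + 1)),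
        IsBoxMap f → InBox n k ε f → X.obj m),
      (∀ {m m' : ℕ} (g : Cube m → Cube m') (hg : IsBoxMap g)
          (f : Cube m' → Cube (n + 1)) (hf : IsBoxMap f)
          (hbox : InBox n k ε f) (hbox' : InBox n k ε (f ∘ g)),
          b (f ∘ g) (IsBoxMap.comp hg hf) hbox' = X.map g hg (b f hf hbox)) →
      (∀ {m : ℕ} (f : Cube m → Cube (n + 1)) (hf : IsBoxMap f) (hbox : InBox n k ε f),
          ComicallyMarked (n + 1) k ε f → X.marked (b f hf hbox)) →
      ∃ x : X.obj (n + 1), X.marked x ∧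
        ∀ {m : ℕ} (f : Cube m → Cube (n + 1)) (hf : IsBoxMap f) (hbox : InBox n k ε f),
          X.map f hf x = b f hf hbox
  ext : ∀ (n k : ℕ) (ε : Bool), 1 ≤ k → k ≤ n + 1 →
    ∀ x : X.obj (n + 1),
      (∀ {m : ℕ} (f : Cube m → Cube (n + 1)) (hf : IsBoxMap f),
        (ComicallyMarked (n + 1) k ε f ∨ (InBox n k ε f ∧ n ≤ m)) →
        X.marked (X.map f hf x)) →
      X.marked (X.map (face1 k ε) (face1_isBoxMap k ε) x)

/-- A `1`-cube of a marked cubical set is degenerate if it is of the form `z·σ₁`. -/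
def IsDegenOne (X : MCSet) (u : X.obj 1) : Prop :=
  ∃ z : X.obj 0, u = X.map (degen1 1) (degen1_isBoxMap 1) z

/-- Two `1`-cubes `f`, `g` of a marked cubical set are homotopic if there is a marked
`2`-cube having `f` on one face, `g` on the parallel face, and degenerate `1`-cubes on the
two remaining faces (in any one of the configurations listed in the paper). -/
def Homotopic (X : MCSet) (f g : X.obj 1) : Prop :=
  ∃ H : X.obj 2, X.marked H ∧
    ((((X.map (face1 1 false) (face1_isBoxMap 1 false) H = f ∧
        X.map (face1 1 true) (face1_isBoxMap 1 true) H = g) ∨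
       (X.map (face1 1 false) (face1_isBoxMap 1 false) H = g ∧
        X.map (face1 1 true) (face1_isBoxMap 1 true) H = f)) ∧
      IsDegenOne X (X.map (face1 2 false) (face1_isBoxMap 2 false) H) ∧
      IsDegenOne X (X.map (face1 2 true) (face1_isBoxMap 2 true) H)) ∨
     (((X.map (face1 2 false) (face1_isBoxMap 2 false) H = f ∧
        X.map (face1 2 true) (face1_isBoxMap 2 true) H = g) ∨
       (X.map (face1 2 false) (face1_isBoxMap 2 false) H = g ∧
        X.map (face1 2 true) (face1_isBoxMap 2 true) H = f)) ∧
      IsDegenOne X (X.map (face1 1 false) (face1_isBoxMap 1 false) H) ∧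
      IsDegenOne X (X.map (face1 1 true) (face1_isBoxMap 1 true) H)))

namespace Cube

instance {n : ℕ} : DecidableEq (Cube n) := inferInstanceAs (DecidableEq (Fin n → Bool))

instance {n : ℕ} : Fintype (Cube n) := inferInstanceAs (Fintype (Fin n → Bool))

instance : Subsingleton (Cube 0) := inferInstanceAs (Subsingleton (Fin 0 → Bool))

theorem card (n : ℕ) : Fintype.card (Cube n) = 2 ^ n :=
  (Fintype.card_fun (α := Fin n) (β := Bool)).trans (by simp)

theorem le_of_injective {m n : ℕ} {f : Cube m → Cube n} (hf : Function.Injective f) : m ≤ n := by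
  have := Fintype.card_le_of_injective f hf
  rwa [card, card, Nat.pow_le_pow_iff_right (by norm_num)] at this

/-- The coordinates padded with `false`: on `ℕ`-indexed sequences the cubical identities become
plain index arithmetic. -/
def seq {n : ℕ} (x : Cube n) (k : ℕ) : Bool := if h : k < n then x ⟨k, h⟩ else false

theorem seq_injective {n : ℕ} : Function.Injective (seq (n := n)) := by
  intro x y h
  funext ⟨k, hk⟩
  simpa [seq, hk] using congrFun h k

theorem ext_seq {m n : ℕ} {f g : Cube m → Cube n} (h : ∀ x, (f x).seq = (g x).seq) : f = g :=
  funext fun x => seq_injective (h x)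

theorem seq_of_lt {n : ℕ} (x : Cube n) {k : ℕ} (h : k < n) : x.seq k = x ⟨k, h⟩ := dif_pos h

theorem seq_of_le {n : ℕ} (x : Cube n) {k : ℕ} (h : n ≤ k) : x.seq k = false := dif_neg (by omega)

theorem seq_face {n : ℕ} (i : Fin (n + 1)) (ε : Bool) (x : Cube n) :
    (face i ε x).seq =
      fun k => if k < i.val then x.seq k else if k = i.val then ε else x.seq (k - 1) := by
  funext k
  by_cases hk : k < n + 1
  · rw [seq_of_lt _ hk]
    rcases lt_trichotomy k i.val with h | rfl | h
    · rw [if_pos h, seq_of_lt x (by omega)]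
      have := Fin.insertNth_apply_below (α := fun _ => Bool) (j := ⟨k, hk⟩) h ε x
      rw [eq_rec_constant] at this
      exact this
    · rw [if_neg (lt_irrefl _), if_pos rfl]
      exact Fin.insertNth_apply_same (α := fun _ => Bool) i ε x
    · rw [if_neg (by omega), if_neg (by omega), seq_of_lt x (by omega)]
      have := Fin.insertNth_apply_above (α := fun _ => Bool) (j := ⟨k, hk⟩) h ε x
      rw [eq_rec_constant] at this
      exact this
  · rw [seq_of_le _ (by omega), if_neg (by omega), if_neg (by omega), seq_of_le _ (by omega)]

theorem seq_degen {n : ℕ} (i : Fin (n + 1)) (x : Cube (n + 1)) :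
    (degen i x).seq = fun k => if k < i.val then x.seq k else x.seq (k + 1) := by
  funext k
  by_cases hk : k < n
  · rw [seq_of_lt _ hk, degen]
    split_ifs with h
    · rw [Fin.succAbove_of_castSucc_lt _ _ h, seq_of_lt x (by omega)]
      rfl
    · rw [Fin.succAbove_of_le_castSucc _ _ (by simp only [Fin.castSucc_mk, Fin.le_def]; omega),
        seq_of_lt x (by omega)]
      rfl
  · rw [seq_of_le _ (by omega), if_neg (by omega), seq_of_le _ (by omega)]

theorem seq_conn {n : ℕ} (i : Fin (n + 1)) (ε : Bool) (x : Cube (n + 2)) :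
    (conn i ε x).seq = fun k => if k < i.val then x.seq k else
      if k = i.val then (if ε then x.seq k || x.seq (k + 1) else x.seq k && x.seq (k + 1))
      else x.seq (k + 1) := by
  funext k
  by_cases hk : k < n + 1
  · rw [seq_of_lt _ hk, conn]
    simp only [seq_of_lt x (show k < n + 2 by omega), seq_of_lt x (show k + 1 < n + 2 by omega)]
    split_ifs <;> first | rfl | (subst_vars; rfl)
  · rw [seq_of_le _ (by omega), if_neg (by omega), if_neg (by omega), seq_of_le _ (by omega)]

end Cube

section CubicalIdentities

open Cube

variable {n : ℕ}

theorem degen_comp_face_self (i : Fin (n + 1)) (ε : Bool) : degen i ∘ face i ε = id :=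
  ext_seq fun x => by
    funext k
    simp only [Function.comp_apply, seq_degen, seq_face, id]
    split_ifs <;> first | rfl | omega

theorem degen_comp_face_of_lt (i j : Fin (n + 2)) (ε : Bool) (hij : i.val < j.val) :
    degen i ∘ face j ε = face (n := n) ⟨j.val - 1, by omega⟩ ε ∘ degen ⟨i.val, by omega⟩ :=
  ext_seq fun x => by
    funext k
    simp only [Function.comp_apply, seq_degen, seq_face]
    split_ifs <;> first | rfl | omega | (congr 1; omega)

theorem degen_comp_face_of_gt (i j : Fin (n + 2)) (ε : Bool) (hji : j.val < i.val) :
    degen i ∘ face j ε = face (n := n) ⟨j.val, by omega⟩ ε ∘ degen ⟨i.val - 1, by omega⟩ :=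
  ext_seq fun x => by
    funext k
    simp only [Function.comp_apply, seq_degen, seq_face]
    split_ifs <;> first | rfl | omega | (congr 1; omega)

theorem conn_comp_face_not (i : Fin (n + 1)) (ε : Bool) (j : Fin (n + 2))
    (hj : j.val = i.val ∨ j.val = i.val + 1) : conn i ε ∘ face j (!ε) = id :=
  ext_seq fun x => by
    funext k
    simp only [Function.comp_apply, seq_conn, seq_face, id]
    split_ifs <;> first | rfl | omega | (cases ε <;> simp_all)

theorem conn_comp_face_self (i : Fin (n + 1)) (ε : Bool) (j : Fin (n + 2))
    (hj : j.val = i.val ∨ j.val = i.val + 1) :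
    conn i ε ∘ face j ε = face i ε ∘ degen i :=
  ext_seq fun x => by
    funext k
    simp only [Function.comp_apply, seq_conn, seq_face, seq_degen]
    split_ifs <;> first | rfl | omega | (congr 1; omega) | (cases ε <;> simp_all)

theorem conn_comp_face_of_lt (i : Fin (n + 2)) (ε : Bool) (j : Fin (n + 3)) (δ : Bool)
    (hji : j.val < i.val) :
    conn i ε ∘ face j δ = face (n := n + 1) ⟨j.val, by omega⟩ δ ∘ conn ⟨i.val - 1, by omega⟩ ε :=
  ext_seq fun x => by
    funext k
    simp only [Function.comp_apply, seq_conn, seq_face]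
    split_ifs <;> first | rfl | omega | (congr 1; omega) | (congr 2; omega)

theorem conn_comp_face_of_gt (i : Fin (n + 2)) (ε : Bool) (j : Fin (n + 3)) (δ : Bool)
    (hij : i.val + 1 < j.val) :
    conn i ε ∘ face j δ = face (n := n + 1) ⟨j.val - 1, by omega⟩ δ ∘ conn ⟨i.val, by omega⟩ ε :=
  ext_seq fun x => by
    funext k
    simp only [Function.comp_apply, seq_conn, seq_face]
    split_ifs <;> first | rfl | omega | (congr 1; omega)

end CubicalIdentities

inductive IsFaceWord : {m n : ℕ} → (Cube m → Cube n) → Prop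
  | nil {n : ℕ} : IsFaceWord (id : Cube n → Cube n)
  | face_comp {m n : ℕ} (i : Fin (n + 1)) (ε : Bool) {f : Cube m → Cube n} :
      IsFaceWord f → IsFaceWord (face i ε ∘ f)

/-- The generators of `□` that produce degenerate cubes: degeneracies and connections. -/
inductive IsDegeneracy : {m n : ℕ} → (Cube m → Cube n) → Prop
  | degen {n : ℕ} (i : Fin (n + 1)) : IsDegeneracy (degen i)
  | conn {n : ℕ} (i : Fin (n + 1)) (ε : Bool) : IsDegeneracy (conn i ε)

inductive IsDegeneracyWord : {m n : ℕ} → (Cube m → Cube n) → Prop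
  | nil {n : ℕ} : IsDegeneracyWord (id : Cube n → Cube n)
  | comp_degeneracy {m p n : ℕ} {f : Cube p → Cube n} {c : Cube m → Cube p} :
      IsDegeneracyWord f → IsDegeneracy c → IsDegeneracyWord (f ∘ c)

def HasNormalForm {m n : ℕ} (f : Cube m → Cube n) : Prop :=
  ∃ (r : ℕ) (F : Cube r → Cube n) (C : Cube m → Cube r),
    IsFaceWord F ∧ IsDegeneracyWord C ∧ f = F ∘ C

section NormalForm

variable {m n p : ℕ}

theorem IsFaceWord.isBoxMap {f : Cube m → Cube n} (h : IsFaceWord f) : IsBoxMap f := by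
  induction h with
  | nil => exact IsBoxMap.id
  | face_comp i ε _ ih => exact ih.comp (IsBoxMap.face i ε)

theorem IsDegeneracy.isBoxMap {f : Cube m → Cube n} : IsDegeneracy f → IsBoxMap f
  | .degen i => IsBoxMap.degen i
  | .conn i ε => IsBoxMap.conn i ε

theorem IsDegeneracyWord.isBoxMap {f : Cube m → Cube n} (h : IsDegeneracyWord f) :
    IsBoxMap f := by
  induction h with
  | nil => exact IsBoxMap.id
  | comp_degeneracy _ hc ih => exact hc.isBoxMap.comp ih

theorem IsDegeneracy.isDegeneracyWord {f : Cube m → Cube n} (h : IsDegeneracy f) :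
    IsDegeneracyWord f :=
  (IsDegeneracyWord.comp_degeneracy .nil h :)

theorem IsFaceWord.comp {f : Cube m → Cube n} {g : Cube p → Cube m} (hf : IsFaceWord f)
    (hg : IsFaceWord g) : IsFaceWord (f ∘ g) := by
  induction hf with
  | nil => exact hg
  | face_comp i ε _ ih => exact .face_comp i ε ih

theorem IsDegeneracyWord.comp {f : Cube m → Cube n} {g : Cube p → Cube m}
    (hf : IsDegeneracyWord f) (hg : IsDegeneracyWord g) : IsDegeneracyWord (f ∘ g) := by
  induction hg with
  | nil => exact hf
  | comp_degeneracy _ hc ih => exact (comp_degeneracy (ih hf) hc :)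

theorem IsFaceWord.injective {f : Cube m → Cube n} (h : IsFaceWord f) : Function.Injective f := by
  induction h with
  | nil => exact Function.injective_id
  | face_comp i ε _ ih => exact (Fin.insertNth_right_injective (α := fun _ => Bool) ε).comp ih

theorem IsFaceWord.eq_id {f : Cube n → Cube n} (h : IsFaceWord f) : f = id := by
  cases h with
  | nil => rfl
  | face_comp i ε hf => exact absurd (Cube.le_of_injective hf.injective) (by omega)

theorem IsDegeneracy.dim_eq {f : Cube m → Cube n} : IsDegeneracy f → m = n + 1
  | .degen _ => rfl
  | .conn _ _ => rfl

theorem IsDegeneracy.not_injective {f : Cube m → Cube n} (h : IsDegeneracy f) :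
    ¬ Function.Injective f := fun hinj => by
  have := Cube.le_of_injective hinj
  have := h.dim_eq
  omega

theorem IsDegeneracy.comp_face {c : Cube (n + 2) → Cube (n + 1)} (hc : IsDegeneracy c)
    (i : Fin (n + 2)) (ε : Bool) :
    c ∘ face i ε = id ∨ ∃ (j : Fin (n + 1)) (δ : Bool) (c' : Cube (n + 1) → Cube n),
      IsDegeneracy c' ∧ c ∘ face i ε = face j δ ∘ c' := by
  cases hc with
  | degen i₀ =>
    rcases lt_trichotomy i₀.val i.val with h | h | h
    · exact .inr ⟨_, ε, _, .degen _, degen_comp_face_of_lt i₀ i ε h⟩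
    · exact .inl (Fin.ext h ▸ degen_comp_face_self i₀ ε)
    · exact .inr ⟨_, ε, _, .degen _, degen_comp_face_of_gt i₀ i ε h⟩
  | conn i₀ ε₀ =>
    by_cases hi : i.val = i₀.val ∨ i.val = i₀.val + 1
    · rcases Bool.eq_or_eq_not ε ε₀ with rfl | rfl
      · exact .inr ⟨i₀, ε, _, .degen i₀, conn_comp_face_self i₀ ε i hi⟩
      · exact .inl (conn_comp_face_not i₀ _ i hi)
    · obtain ⟨n, rfl⟩ : ∃ k, n = k + 1 := ⟨n - 1, by omega⟩
      rcases Nat.lt_or_gt_of_ne (show i.val ≠ i₀.val by omega) with h | h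
      · exact .inr ⟨_, ε, _, .conn _ ε₀, conn_comp_face_of_lt i₀ ε₀ i ε h⟩
      · exact .inr ⟨_, ε, _, .conn _ ε₀, conn_comp_face_of_gt i₀ ε₀ i ε (by omega)⟩

theorem IsFaceWord.hasNormalForm_degeneracy_comp {F : Cube m → Cube n} (hF : IsFaceWord F)
    {c : Cube n → Cube p} (hc : IsDegeneracy c) : HasNormalForm (c ∘ F) := by
  induction hF generalizing p with
  | nil => exact ⟨_, _, _, .nil, hc.isDegeneracyWord, rfl⟩
  | @face_comp n i ε f hf ih =>
    obtain rfl : p = n := by have := hc.dim_eq; omega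
    have hid : c ∘ face i ε = id → HasNormalForm (c ∘ (face i ε ∘ f)) := fun h =>
      ⟨_, f, id, hf, .nil, by rw [← Function.comp_assoc, h]; rfl⟩
    cases p with
    | zero => exact hid (Subsingleton.elim _ _)
    | succ p =>
      rcases hc.comp_face i ε with h | ⟨j, δ, c', hc', h⟩
      · exact hid h
      · obtain ⟨r, F', C, hF', hC, he⟩ := ih hc'
        refine ⟨r, face j δ ∘ F', C, .face_comp j δ hF', hC, ?_⟩
        rw [← Function.comp_assoc, h, Function.comp_assoc, he, Function.comp_assoc]

theorem IsDegeneracyWord.hasNormalForm_comp {C : Cube m → Cube n} (hC : IsDegeneracyWord C)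
    {F : Cube p → Cube m} (hF : IsFaceWord F) : HasNormalForm (C ∘ F) := by
  induction hC generalizing p with
  | nil => exact ⟨_, F, id, hF, .nil, rfl⟩
  | comp_degeneracy _ hc ih =>
    obtain ⟨r₁, F₁, C₁, hF₁, hC₁, he₁⟩ := hF.hasNormalForm_degeneracy_comp hc
    obtain ⟨r₂, F₂, C₂, hF₂, hC₂, he₂⟩ := ih hF₁
    exact ⟨r₂, F₂, C₂ ∘ C₁, hF₂, hC₂.comp hC₁, by
      rw [Function.comp_assoc, he₁, ← Function.comp_assoc, he₂, Function.comp_assoc]⟩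

theorem IsBoxMap.hasNormalForm {f : Cube m → Cube n} (hf : IsBoxMap f) : HasNormalForm f := by
  induction hf with
  | id => exact ⟨_, _, _, .nil, .nil, rfl⟩
  | face i ε => exact ⟨_, _, _, .face_comp i ε .nil, .nil, rfl⟩
  | degen i => exact ⟨_, _, _, .nil, (IsDegeneracy.degen i).isDegeneracyWord, rfl⟩
  | conn i ε => exact ⟨_, _, _, .nil, (IsDegeneracy.conn i ε).isDegeneracyWord, rfl⟩
  | comp _ _ ihf ihg =>
    obtain ⟨r₁, F₁, C₁, hF₁, hC₁, rfl⟩ := ihf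
    obtain ⟨r₂, F₂, C₂, hF₂, hC₂, rfl⟩ := ihg
    obtain ⟨r₃, F₃, C₃, hF₃, hC₃, he₃⟩ := hC₂.hasNormalForm_comp hF₁
    exact ⟨r₃, F₂ ∘ F₃, C₃ ∘ C₁, hF₂.comp hF₃, hC₃.comp hC₁, by
      simp only [Function.comp_assoc]
      rw [← Function.comp_assoc C₂, he₃, Function.comp_assoc]⟩

end NormalForm

section FaceOne

open Cube

variable {n : ℕ}

theorem face1_injective (p : ℕ) (ε : Bool) : Function.Injective (face1 (n := n) p ε) :=
  Fin.insertNth_right_injective (α := fun _ => Bool) ε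

theorem face1_comp_face1_of_lt {j' j : ℕ} (δ' δ : Bool) (h₁ : 1 ≤ j') (h₂ : j' < j)
    (h₃ : j ≤ n + 2) :
    face1 (n := n + 1) j δ ∘ face1 j' δ' = face1 j' δ' ∘ face1 (j - 1) δ :=
  ext_seq fun x => by
    funext k
    simp only [Function.comp_apply, face1, seq_face]
    split_ifs <;> first | rfl | omega

theorem seq_face1_self {p : ℕ} (ε : Bool) (h₁ : 1 ≤ p) (h₂ : p ≤ n + 1) (x : Cube n) :
    (face1 p ε x).seq (p - 1) = ε := by
  simp only [face1, seq_face]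
  split_ifs <;> first | rfl | omega

theorem face1_eq_face1_iff {p : ℕ} {ε ε' : Bool} (h₁ : 1 ≤ p) (h₂ : p ≤ n + 1) {x y : Cube n} :
    face1 p ε x = face1 p ε' y ↔ ε = ε' ∧ x = y := by
  refine ⟨fun h => ?_, fun ⟨rfl, rfl⟩ => rfl⟩
  obtain rfl : ε = ε' := by
    rw [← seq_face1_self ε h₁ h₂ x, ← seq_face1_self ε' h₁ h₂ y, h]
  exact ⟨rfl, face1_injective p ε h⟩

/-- Two faces of a cube meet in a face of codimension two. -/
theorem face1_eq_face1_of_lt {j' j : ℕ} {δ' δ : Bool} (h₁ : 1 ≤ j') (h₂ : j' < j)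
    (h₃ : j ≤ n + 2) {a b : Cube (n + 1)} (hab : face1 j δ a = face1 j' δ' b) :
    a = face1 j' δ' (degen1 j' a) ∧ b = face1 (j - 1) δ (degen1 j' a) := by
  have ha : a = face1 j' δ' (degen1 j' a) := by
    have hδ' : a.seq (j' - 1) = δ' := by
      have := congrFun (congrArg seq hab) (j' - 1)
      simp only [face1, seq_face] at this
      split_ifs at this <;> omega
    apply seq_injective
    funext k
    simp only [face1, degen1, seq_face, seq_degen]
    split_ifs <;> first | rfl | omega | (subst_vars; first | exact hδ'.symm | (congr 1; omega))
  refine ⟨ha, face1_injective j' δ' ?_⟩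
  rw [← hab]
  conv_lhs => rw [ha]
  exact congrFun (face1_comp_face1_of_lt δ' δ h₁ h₂ h₃) _

end FaceOne

notation "∂[" X "," j "," δ "]" => MCSet.map X (face1 j δ) (face1_isBoxMap j δ)

notation "σ[" X "," j "]" => MCSet.map X (degen1 j) (degen1_isBoxMap j)

namespace MCSet

variable (X : MCSet) {m n n' p : ℕ}

theorem map_congr {f g : Cube m → Cube n} (h : f = g) (hf : IsBoxMap f) (hg : IsBoxMap g)
    (x : X.obj n) : X.map f hf x = X.map g hg x := by
  subst h; rfl

theorem map_map_of_comp_eq {f₁ : Cube m → Cube n} {g₁ : Cube n → Cube p}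
    {f₂ : Cube m → Cube n'} {g₂ : Cube n' → Cube p} (h : g₁ ∘ f₁ = g₂ ∘ f₂)
    {hf₁ : IsBoxMap f₁} {hg₁ : IsBoxMap g₁} {hf₂ : IsBoxMap f₂} {hg₂ : IsBoxMap g₂}
    (x : X.obj p) : X.map f₁ hf₁ (X.map g₁ hg₁ x) = X.map f₂ hf₂ (X.map g₂ hg₂ x) := by
  rw [← X.map_comp, ← X.map_comp]
  exact X.map_congr h _ _ x

theorem map_map_of_comp_eq_id {f : Cube n → Cube m} {g : Cube m → Cube n}
    (h : g ∘ f = id) {hf : IsBoxMap f} {hg : IsBoxMap g} (x : X.obj n) :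
    X.map f hf (X.map g hg x) = x := by
  rw [← X.map_comp]
  exact (X.map_congr h _ IsBoxMap.id x).trans (X.map_id n x)

theorem marked_map_of_isDegeneracy {c : Cube m → Cube n} (hc : IsDegeneracy c)
    (hc' : IsBoxMap c) (x : X.obj n) : X.marked (X.map c hc' x) := by
  cases hc with
  | degen i => exact X.marked_degen i x
  | conn i ε => exact X.marked_conn i ε x

theorem marked_map_of_not_injective {f : Cube m → Cube n} (hf : IsBoxMap f)
    (hinj : ¬ Function.Injective f) (x : X.obj n) : X.marked (X.map f hf x) := by
  obtain ⟨r, F, C, hF, hC, rfl⟩ := hf.hasNormalForm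
  cases hC with
  | nil => exact absurd hF.injective hinj
  | comp_degeneracy hw hc =>
    have hFw := hw.isBoxMap.comp hF.isBoxMap
    rw [X.map_congr (Function.comp_assoc _ _ _).symm hf (hc.isBoxMap.comp hFw),
      X.map_comp _ hc.isBoxMap _ hFw]
    exact X.marked_map_of_isDegeneracy hc _ _

end MCSet

theorem IsBoxMap.eq_id_of_injective {n : ℕ} {f : Cube n → Cube n} (hf : IsBoxMap f)
    (hinj : Function.Injective f) : f = fun x => x := by
  obtain ⟨r, F, C, hF, hC, rfl⟩ := hf.hasNormalForm
  cases hC with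
  | nil => exact hF.eq_id
  | comp_degeneracy _ hc => exact absurd hinj.of_comp.of_comp hc.not_injective

section ComicalMarking

variable {k : ℕ} {ε : Bool}

theorem mem_avoidSet_self (e : Bool) : (k, e) ∈ avoidSet k ε := by
  cases e <;> cases ε <;> simp [avoidSet]

theorem ne_of_not_mem_avoidSet {j : ℕ} {δ : Bool} (h : (j, δ) ∉ avoidSet k ε) :
    (j, δ) ≠ (k, ε) :=
  fun he => h (he ▸ mem_avoidSet_self ε)

theorem ComicallyMarked.eq_face1 {f : Cube 2 → Cube 3} (hf : ComicallyMarked 3 k ε f)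
    (hinj : Function.Injective f) :
    ∃ p e, 1 ≤ p ∧ p ≤ 3 ∧ (p, e) ∉ avoidSet k ε ∧ f = face1 p e := by
  obtain hni | ⟨ld, hlen, hvalid, -, havoid, hfx⟩ := hf
  · exact absurd hinj hni
  rcases ld with _ | ⟨⟨p, e⟩, _ | _⟩
  · simp at hlen
  · exact ⟨p, e, hvalid.1, hvalid.2.1, havoid _ (by simp), funext hfx⟩
  · simp only [List.length_cons] at hlen; omega

theorem ComicallyMarked.eq_face1_comp_face1 {f : Cube 1 → Cube 3}
    (hf : ComicallyMarked 3 k ε f) (hinj : Function.Injective f) :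
    ∃ p₁ e₁ p₂ e₂, 1 ≤ p₂ ∧ p₂ < p₁ ∧ p₁ ≤ 3 ∧ (p₁, e₁) ∉ avoidSet k ε ∧
      (p₂, e₂) ∉ avoidSet k ε ∧ f = face1 p₁ e₁ ∘ face1 p₂ e₂ := by
  obtain hni | ⟨ld, hlen, hvalid, hchain, havoid, hfx⟩ := hf
  · exact absurd hinj hni
  rcases ld with _ | ⟨⟨p₁, e₁⟩, _ | ⟨⟨p₂, e₂⟩, _ | _⟩⟩
  · simp at hlen
  · simp at hlen
  · exact ⟨p₁, e₁, p₂, e₂, hvalid.2.2.1, List.isChain_pair (R := (· > ·)).mp hchain, hvalid.2.1,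
      havoid _ (by simp), havoid _ (by simp), funext hfx⟩
  · simp only [List.length_cons] at hlen; omega

theorem not_comicallyMarked_of_dim_zero (hk₁ : 1 ≤ k) (hk₃ : k ≤ 3) (f : Cube 0 → Cube 3) :
    ¬ ComicallyMarked 3 k ε f := by
  rintro (hni | ⟨ld, hlen, hvalid, hchain, havoid, -⟩)
  · exact hni fun a b _ => Subsingleton.elim a b
  rcases ld with _ | ⟨⟨p₁, e₁⟩, _ | ⟨⟨p₂, e₂⟩, _ | ⟨⟨p₃, e₃⟩, _ | _⟩⟩⟩
  · simp at hlen
  · simp at hlen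
  · simp at hlen
  · obtain ⟨h₁₂, h₂₃⟩ := List.isChain_cons_cons.mp hchain
    have h₂₃ := List.isChain_pair.mp h₂₃
    simp only [deltaValid, List.length_cons, List.length_nil] at hvalid
    obtain rfl | rfl | rfl : k = p₁ ∨ k = p₂ ∨ k = p₃ := by omega
    · exact havoid _ (by simp) (mem_avoidSet_self e₁)
    · exact havoid _ (by simp) (mem_avoidSet_self e₂)
    · exact havoid _ (by simp) (mem_avoidSet_self e₃)
  · simp at hlen

end ComicalMarking

/-- The faces `F j δ`, `(j, δ) ≠ (k, ε)`, of a `(k,ε)`-open box of dimension `n + 2` in `X`,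
agreeing on common edges; only the values at `1 ≤ j ≤ n + 2` matter. -/
def IsOpenBox (X : MCSet) (n k : ℕ) (ε : Bool) (F : ℕ → Bool → X.obj (n + 1)) : Prop :=
  ∀ j' δ' j δ, 1 ≤ j' → j' < j → j ≤ n + 2 → (j', δ') ≠ (k, ε) → (j, δ) ≠ (k, ε) →
    ∂[X, j', δ'] (F j δ) = ∂[X, j - 1, δ] (F j' δ')

namespace IsOpenBox

variable {X : MCSet} {n k : ℕ} {ε : Bool} {F : ℕ → Bool → X.obj (n + 1)}

theorem map_eq_map_of_lt (hF : IsOpenBox X n k ε F) {m j' j : ℕ} {δ' δ : Bool}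
    (h₁ : 1 ≤ j') (h₂ : j' < j) (h₃ : j ≤ n + 2) (hne' : (j', δ') ≠ (k, ε))
    (hne : (j, δ) ≠ (k, ε)) {g g' : Cube m → Cube (n + 1)} (hg : IsBoxMap g)
    (hg' : IsBoxMap g') (h : face1 j δ ∘ g = face1 j' δ' ∘ g') :
    X.map g hg (F j δ) = X.map g' hg' (F j' δ') := by
  have hc : IsBoxMap (degen1 j' ∘ g) := hg.comp (degen1_isBoxMap j')
  have hpull := fun x => face1_eq_face1_of_lt h₁ h₂ h₃ (congrFun h x)
  calc X.map g hg (F j δ)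
      = X.map (face1 j' δ' ∘ (degen1 j' ∘ g)) (hc.comp (face1_isBoxMap j' δ')) (F j δ) :=
        X.map_congr (funext fun x => (hpull x).1) _ _ _
    _ = X.map (degen1 j' ∘ g) hc (∂[X, j - 1, δ] (F j' δ')) := by
        rw [X.map_comp _ hc _ (face1_isBoxMap j' δ'), hF j' δ' j δ h₁ h₂ h₃ hne' hne]
    _ = X.map g' hg' (F j' δ') := by
        rw [← X.map_comp]
        exact X.map_congr (funext fun x => (hpull x).2.symm) _ _ _

theorem map_eq_map (hF : IsOpenBox X n k ε F) {m j j' : ℕ} {δ δ' : Bool}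
    (h₁ : 1 ≤ j) (h₂ : j ≤ n + 2) (hne : (j, δ) ≠ (k, ε))
    (h₁' : 1 ≤ j') (h₂' : j' ≤ n + 2) (hne' : (j', δ') ≠ (k, ε))
    {g g' : Cube m → Cube (n + 1)} (hg : IsBoxMap g) (hg' : IsBoxMap g')
    (h : face1 j δ ∘ g = face1 j' δ' ∘ g') :
    X.map g hg (F j δ) = X.map g' hg' (F j' δ') := by
  rcases lt_trichotomy j' j with hlt | rfl | hlt
  · exact hF.map_eq_map_of_lt h₁' hlt h₂ hne' hne hg hg' h
  · have hfg := fun x => (face1_eq_face1_iff h₁ h₂).1 (congrFun h x)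
    obtain rfl := (hfg fun _ => false).1
    obtain rfl : g = g' := funext fun x => (hfg x).2
    rfl
  · exact (hF.map_eq_map_of_lt h₁ hlt h₂' hne hne' hg' hg h.symm).symm

end IsOpenBox

/-- The marking condition on a three-dimensional open box: its faces, and the edges between faces
outside `avoidSet k ε`, are marked. These are the non-degenerate cubes of `⊓³_{k,ε}` marked in
`□³_{k,ε}`. -/
def IsMarkedOpenBox (X : MCSet) (k : ℕ) (ε : Bool) (F : ℕ → Bool → X.obj 2) : Prop :=
  (∀ j δ, 1 ≤ j → j ≤ 3 → (j, δ) ≠ (k, ε) → X.marked (F j δ)) ∧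
  ∀ j δ j' δ', 1 ≤ j' → j' < j → j ≤ 3 → (j, δ) ∉ avoidSet k ε → (j', δ') ∉ avoidSet k ε →
    X.marked (∂[X, j', δ'] (F j δ))

section Filler

variable {X : MCSet} {k : ℕ} {ε : Bool} {F : ℕ → Bool → X.obj 2}

theorem IsMarkedOpenBox.exists_marked_factor (hFm : IsMarkedOpenBox X k ε F) (hk₁ : 1 ≤ k)
    (hk₃ : k ≤ 3) {m : ℕ} {f : Cube m → Cube 3} (hf : ComicallyMarked 3 k ε f)
    (hinj : Function.Injective f) (hm : m ≤ 2) :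
    ∃ (j : ℕ) (δ : Bool) (g : Cube m → Cube 2) (hg : IsBoxMap g),
      1 ≤ j ∧ j ≤ 3 ∧ (j, δ) ≠ (k, ε) ∧ f = face1 j δ ∘ g ∧ X.marked (X.map g hg (F j δ)) := by
  interval_cases m
  · exact absurd hf (not_comicallyMarked_of_dim_zero hk₁ hk₃ f)
  · obtain ⟨p₁, e₁, p₂, e₂, h₁, h₂, h₃, hav₁, hav₂, rfl⟩ := hf.eq_face1_comp_face1 hinj
    exact ⟨p₁, e₁, _, face1_isBoxMap p₂ e₂, by omega, h₃, ne_of_not_mem_avoidSet hav₁, rfl,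
      hFm.2 _ _ _ _ h₁ h₂ h₃ hav₁ hav₂⟩
  · obtain ⟨p, e, h₁, h₃, hav, rfl⟩ := hf.eq_face1 hinj
    refine ⟨p, e, fun y => y, IsBoxMap.id, h₁, h₃, ne_of_not_mem_avoidSet hav, rfl, ?_⟩
    rw [X.map_id]
    exact hFm.1 p e h₁ h₃ (ne_of_not_mem_avoidSet hav)

theorem IsComical.exists_marked_filler_three (hX : IsComical X) (hk₁ : 1 ≤ k) (hk₃ : k ≤ 3)
    (hF : IsOpenBox X 1 k ε F) (hFm : IsMarkedOpenBox X k ε F) :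
    ∃ x : X.obj 3, X.marked x ∧
      ∀ j δ, 1 ≤ j → j ≤ 3 → (j, δ) ≠ (k, ε) → ∂[X, j, δ] x = F j δ := by
  have hbox : ∀ m (f : Cube m → Cube 3), InBox 2 k ε f →
      ∃ (j : ℕ) (δ : Bool) (g : Cube m → Cube 2),
        IsBoxMap g ∧ 1 ≤ j ∧ j ≤ 3 ∧ (j, δ) ≠ (k, ε) ∧ f = face1 j δ ∘ g := fun _ _ h => h
  -- the box is evaluated on each of its cubes through a chosen face containing it
  choose j δ g hg hj₁ hj₃ hne hfg using hbox
  have hval : ∀ {m} (f : Cube m → Cube 3) (h : InBox 2 k ε f) {j' δ'} {g' : Cube m → Cube 2}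
      (hg' : IsBoxMap g'), 1 ≤ j' → j' ≤ 3 → (j', δ') ≠ (k, ε) → f = face1 j' δ' ∘ g' →
      X.map (g m f h) (hg m f h) (F (j m f h) (δ m f h)) = X.map g' hg' (F j' δ') :=
    fun f h _ _ _ hg' h₁ h₃ hne' hf' => hF.map_eq_map (hj₁ _ f h) (hj₃ _ f h) (hne _ f h)
      h₁ h₃ hne' _ hg' ((hfg _ f h).symm.trans hf')
  obtain ⟨x, hx, hxbox⟩ := hX.fill 2 k ε hk₁ hk₃
    (fun {m} f _ h => X.map (g m f h) (hg m f h) (F (j m f h) (δ m f h)))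
    (fun g₀ hg₀ f _ h h' => by
      rw [hval _ h' (hg₀.comp (hg _ f h)) (hj₁ _ f h) (hj₃ _ f h) (hne _ f h)
        (congrArg (· ∘ g₀) (hfg _ f h)), X.map_comp])
    (fun f hf h hcm => by
      by_cases hinj : Function.Injective f
      · have hm := Cube.le_of_injective (f := g _ f h) (hfg _ f h ▸ hinj).of_comp
        obtain ⟨j', δ', g', hg', h₁, h₃, hne', hf', hmk⟩ :=
          hFm.exists_marked_factor hk₁ hk₃ hcm hinj hm
        rw [hval f h hg' h₁ h₃ hne' hf']
        exact hmk
      · refine X.marked_map_of_not_injective _ (fun hginj => hinj ?_) _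
        rw [hfg _ f h]
        exact (face1_injective _ _).comp hginj)
  refine ⟨x, hx, fun j δ h₁ h₃ hne' => ?_⟩
  have hb : InBox 2 k ε (face1 j δ) := ⟨j, δ, fun y => y, IsBoxMap.id, h₁, h₃, hne', rfl⟩
  rw [hxbox _ _ hb, hval _ hb IsBoxMap.id h₁ h₃ hne' rfl, X.map_id]

theorem IsComical.marked_face_of_filler (hX : IsComical X) (hk₁ : 1 ≤ k) (hk₃ : k ≤ 3)
    (hFm : IsMarkedOpenBox X k ε F) {x : X.obj 3} (hx : X.marked x)
    (hfaces : ∀ j δ, 1 ≤ j → j ≤ 3 → (j, δ) ≠ (k, ε) → ∂[X, j, δ] x = F j δ) :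
    X.marked (∂[X, k, ε] x) := by
  have hmap : ∀ {m} {f : Cube m → Cube 3} (hf : IsBoxMap f) {j δ} {g : Cube m → Cube 2}
      (hg : IsBoxMap g), 1 ≤ j → j ≤ 3 → (j, δ) ≠ (k, ε) → f = face1 j δ ∘ g →
      X.map f hf x = X.map g hg (F j δ) := by
    rintro m f hf j δ g hg h₁ h₃ hne' rfl
    rw [X.map_comp _ hg _ (face1_isBoxMap j δ), hfaces j δ h₁ h₃ hne']
  refine hX.ext 2 k ε hk₁ hk₃ x fun {m} f hf hcm => ?_
  by_cases hinj : Function.Injective f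
  · rcases hcm with hcm | ⟨⟨j', δ', g', hg', h₁, h₃, hne', rfl⟩, hm⟩
    · rcases Nat.lt_or_ge m 3 with hm | hm
      · obtain ⟨j', δ', g', hg', h₁, h₃, hne', hf', hmk⟩ :=
          hFm.exists_marked_factor hk₁ hk₃ hcm hinj (by omega)
        rw [hmap hf hg' h₁ h₃ hne' hf']
        exact hmk
      · obtain rfl : m = 3 := le_antisymm (Cube.le_of_injective hinj) hm
        rw [X.map_congr (hf.eq_id_of_injective hinj) hf IsBoxMap.id, X.map_id]
        exact hx
    · obtain rfl : m = 2 := le_antisymm (Cube.le_of_injective hinj.of_comp) hm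
      obtain rfl := hg'.eq_id_of_injective hinj.of_comp
      rw [hmap hf hg' h₁ h₃ hne' rfl, X.map_id]
      exact hFm.1 j' δ' h₁ h₃ hne'
  · exact X.marked_map_of_not_injective hf hinj x

theorem IsComical.exists_filler_three (hX : IsComical X) (hk₁ : 1 ≤ k) (hk₃ : k ≤ 3)
    (hF : IsOpenBox X 1 k ε F) (hFm : IsMarkedOpenBox X k ε F) :
    ∃ x : X.obj 3, (∀ j δ, 1 ≤ j → j ≤ 3 → (j, δ) ≠ (k, ε) → ∂[X, j, δ] x = F j δ) ∧
      X.marked (∂[X, k, ε] x) :=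
  let ⟨x, hx, hfaces⟩ := hX.exists_marked_filler_three hk₁ hk₃ hF hFm
  ⟨x, hfaces, hX.marked_face_of_filler hk₁ hk₃ hFm hx hfaces⟩

end Filler

namespace MCSet

variable (X : MCSet) {n : ℕ}

theorem face_face (x : X.obj (n + 2)) {j' j : ℕ} (δ' δ : Bool) (h₁ : 1 ≤ j') (h₂ : j' < j)
    (h₃ : j ≤ n + 2) : ∂[X, j', δ'] (∂[X, j, δ] x) = ∂[X, j - 1, δ] (∂[X, j', δ'] x) :=
  X.map_map_of_comp_eq (face1_comp_face1_of_lt δ' δ h₁ h₂ h₃) x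

theorem face_degen_self (p : ℕ) (δ : Bool) (u : X.obj n) : ∂[X, p, δ] (σ[X, p] u) = u :=
  X.map_map_of_comp_eq_id (degen_comp_face_self _ δ) u

theorem face_degen_degen (j : ℕ) (δ : Bool) (z : X.obj 0) :
    ∂[X, j, δ] (σ[X, 1] (σ[X, 1] z)) = σ[X, 1] z := by
  rw [← X.map_comp, ← X.map_comp]
  exact X.map_congr (Subsingleton.elim _ _) _ _ z

theorem face_one_degen_two (δ : Bool) (a : X.obj 1) :
    ∂[X, 1, δ] (σ[X, 2] a) = σ[X, 1] (∂[X, 1, δ] a) :=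
  X.map_map_of_comp_eq (by cases δ <;> decide) a

theorem face_two_degen_one (δ : Bool) (a : X.obj 1) :
    ∂[X, 2, δ] (σ[X, 1] a) = σ[X, 1] (∂[X, 1, δ] a) :=
  X.map_map_of_comp_eq (by cases δ <;> decide) a

end MCSet

theorem IsDegenOne.eq_degen {X : MCSet} {u : X.obj 1} (h : IsDegenOne X u) :
    u = σ[X, 1] (∂[X, 1, false] u) := by
  obtain ⟨z, rfl⟩ := h
  rw [X.face_degen_self]

def Homotopic₁ (X : MCSet) (f g : X.obj 1) : Prop :=
  ∃ H : X.obj 2, X.marked H ∧ ∂[X, 1, false] H = f ∧ ∂[X, 1, true] H = g ∧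
    IsDegenOne X (∂[X, 2, false] H) ∧ IsDegenOne X (∂[X, 2, true] H)

def Homotopic₂ (X : MCSet) (f g : X.obj 1) : Prop :=
  ∃ H : X.obj 2, X.marked H ∧ ∂[X, 2, false] H = f ∧ ∂[X, 2, true] H = g ∧
    IsDegenOne X (∂[X, 1, false] H) ∧ IsDegenOne X (∂[X, 1, true] H)

section Homotopy

variable {X : MCSet}

theorem homotopic_iff {f g : X.obj 1} :
    Homotopic X f g ↔
      Homotopic₁ X f g ∨ Homotopic₁ X g f ∨ Homotopic₂ X f g ∨ Homotopic₂ X g f := by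
  constructor
  · rintro ⟨H, hm, ⟨⟨hf, hg⟩ | ⟨hg, hf⟩, d₀, d₁⟩ | ⟨⟨hf, hg⟩ | ⟨hg, hf⟩, d₀, d₁⟩⟩
    exacts [.inl ⟨H, hm, hf, hg, d₀, d₁⟩, .inr (.inl ⟨H, hm, hg, hf, d₀, d₁⟩),
      .inr (.inr (.inl ⟨H, hm, hf, hg, d₀, d₁⟩)), .inr (.inr (.inr ⟨H, hm, hg, hf, d₀, d₁⟩))]
  · rintro (⟨H, hm, hf, hg, d₀, d₁⟩ | ⟨H, hm, hg, hf, d₀, d₁⟩ | ⟨H, hm, hf, hg, d₀, d₁⟩ |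
      ⟨H, hm, hg, hf, d₀, d₁⟩)
    exacts [⟨H, hm, .inl ⟨.inl ⟨hf, hg⟩, d₀, d₁⟩⟩, ⟨H, hm, .inl ⟨.inr ⟨hg, hf⟩, d₀, d₁⟩⟩,
      ⟨H, hm, .inr ⟨.inl ⟨hf, hg⟩, d₀, d₁⟩⟩, ⟨H, hm, .inr ⟨.inr ⟨hg, hf⟩, d₀, d₁⟩⟩]

theorem Homotopic.symm {f g : X.obj 1} (h : Homotopic X f g) : Homotopic X g f := by
  rw [homotopic_iff] at h ⊢
  tauto

theorem Homotopic₁.refl (u : X.obj 1) : Homotopic₁ X u u :=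
  ⟨σ[X, 1] u, X.marked_degen _ u, X.face_degen_self 1 false u, X.face_degen_self 1 true u,
    ⟨_, X.face_two_degen_one false u⟩, ⟨_, X.face_two_degen_one true u⟩⟩

theorem Homotopic₂.refl (u : X.obj 1) : Homotopic₂ X u u :=
  ⟨σ[X, 2] u, X.marked_degen _ u, X.face_degen_self 2 false u, X.face_degen_self 2 true u,
    ⟨_, X.face_one_degen_two false u⟩, ⟨_, X.face_one_degen_two true u⟩⟩

end Homotopy

section Euclidean

variable {X : MCSet}

theorem face_two_eq_degen_of_isDegenOne {W : X.obj 2} {a : X.obj 1}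
    (ha : ∂[X, 1, false] W = a) {δ : Bool} (hd : IsDegenOne X (∂[X, 2, δ] W)) :
    ∂[X, 2, δ] W = σ[X, 1] (∂[X, 1, δ] a) := by
  rw [hd.eq_degen, X.face_face W false δ le_rfl one_lt_two le_rfl, ha]
  rfl

theorem face_one_eq_degen_of_isDegenOne {V : X.obj 2} {a : X.obj 1}
    (ha : ∂[X, 2, false] V = a) {δ : Bool} (hd : IsDegenOne X (∂[X, 1, δ] V)) :
    ∂[X, 1, δ] V = σ[X, 1] (∂[X, 1, δ] a) := by
  rw [hd.eq_degen, ← ha, X.face_face V δ false le_rfl one_lt_two le_rfl]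
  rfl

def openBox₁ (X : MCSet) (a : X.obj 1) (W : Bool → X.obj 2) : ℕ → Bool → X.obj 2
  | 1, _ => σ[X, 2] a
  | 2, δ => σ[X, 1] (σ[X, 1] (∂[X, 1, δ] a))
  | _, δ => W δ

def openBox₂ (X : MCSet) (a : X.obj 1) (V : Bool → X.obj 2) : ℕ → Bool → X.obj 2
  | 1, δ => σ[X, 1] (σ[X, 1] (∂[X, 1, δ] a))
  | 2, _ => σ[X, 2] a
  | _, δ => V δ

theorem isOpenBox_openBox₁ {a : X.obj 1} {W : Bool → X.obj 2}
    (ha : ∀ δ, ∂[X, 1, false] (W δ) = a)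
    (hside : ∀ δ δ', ∂[X, 2, δ'] (W δ) = σ[X, 1] (∂[X, 1, δ'] a)) :
    IsOpenBox X 1 1 true (openBox₁ X a W) := by
  intro j' δ' j δ h₁ h₂ h₃ hne' _
  obtain ⟨rfl, rfl⟩ | ⟨rfl, rfl⟩ | ⟨rfl, rfl⟩ :
      (j' = 1 ∧ j = 2) ∨ (j' = 1 ∧ j = 3) ∨ (j' = 2 ∧ j = 3) := by omega
  · obtain rfl : δ' = false := by simpa using hne'
    exact (X.face_degen_degen 1 false _).trans (X.face_one_degen_two δ a).symm
  · obtain rfl : δ' = false := by simpa using hne'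
    exact (ha δ).trans (X.face_degen_self 2 δ a).symm
  · exact (hside δ δ').trans (X.face_degen_degen 2 δ _).symm

theorem isOpenBox_openBox₂ {a : X.obj 1} {V : Bool → X.obj 2}
    (ha : ∀ δ, ∂[X, 2, false] (V δ) = a)
    (hside : ∀ δ δ', ∂[X, 1, δ'] (V δ) = σ[X, 1] (∂[X, 1, δ'] a)) :
    IsOpenBox X 1 2 true (openBox₂ X a V) := by
  intro j' δ' j δ h₁ h₂ h₃ hne' hne
  obtain ⟨rfl, rfl⟩ | ⟨rfl, rfl⟩ | ⟨rfl, rfl⟩ :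
      (j' = 1 ∧ j = 2) ∨ (j' = 1 ∧ j = 3) ∨ (j' = 2 ∧ j = 3) := by omega
  · obtain rfl : δ = false := by simpa using hne
    exact (X.face_one_degen_two δ' a).trans (X.face_degen_degen 1 false _).symm
  · exact (hside δ δ').trans (X.face_degen_degen 2 δ _).symm
  · obtain rfl : δ' = false := by simpa using hne'
    exact (ha δ).trans (X.face_degen_self 2 δ a).symm

theorem isMarkedOpenBox_openBox₁ {a : X.obj 1} {W : Bool → X.obj 2} (hm : ∀ δ, X.marked (W δ))
    (hside : ∀ δ δ', ∂[X, 2, δ'] (W δ) = σ[X, 1] (∂[X, 1, δ'] a)) :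
    IsMarkedOpenBox X 1 true (openBox₁ X a W) := by
  refine ⟨fun j δ h₁ h₃ _ => ?_, fun j δ j' δ' h₁ h₂ h₃ _ hav' => ?_⟩
  · obtain rfl | rfl | rfl : j = 1 ∨ j = 2 ∨ j = 3 := by omega
    exacts [X.marked_degen _ a, X.marked_degen _ _, hm δ]
  · obtain rfl : j' = 2 := by
      by_contra
      obtain rfl : j' = 1 := by omega
      exact hav' (by cases δ' <;> simp [avoidSet])
    obtain rfl : δ' = false := by cases δ' <;> simp_all [avoidSet]
    obtain rfl : j = 3 := by omega
    rw [show openBox₁ X a W 3 δ = W δ from rfl, hside]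
    exact X.marked_degen _ _

theorem isMarkedOpenBox_openBox₂ {a : X.obj 1} {V : Bool → X.obj 2} (hm : ∀ δ, X.marked (V δ))
    (hside : ∀ δ δ', ∂[X, 1, δ'] (V δ) = σ[X, 1] (∂[X, 1, δ'] a)) :
    IsMarkedOpenBox X 2 true (openBox₂ X a V) := by
  refine ⟨fun j δ h₁ h₃ _ => ?_, fun j δ j' δ' h₁ h₂ h₃ hav hav' => ?_⟩
  · obtain rfl | rfl | rfl : j = 1 ∨ j = 2 ∨ j = 3 := by omega
    exacts [X.marked_degen _ _, X.marked_degen _ a, hm δ]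
  · obtain rfl : j = 3 := by
      by_contra
      obtain rfl : j = 2 := by omega
      exact hav (by cases δ <;> simp [avoidSet])
    obtain rfl : j' = 1 := by
      by_contra
      obtain rfl : j' = 2 := by omega
      exact hav' (by cases δ' <;> simp [avoidSet])
    obtain rfl : δ = false := by cases δ <;> simp_all [avoidSet]
    obtain rfl : δ' = false := by cases δ' <;> simp_all [avoidSet]
    rw [show openBox₂ X a V 3 false = V false from rfl, hside]
    exact X.marked_degen _ _

theorem homotopic₂_of_homotopic₁_of_homotopic₁ (hX : IsComical X) {a b c : X.obj 1}
    (hab : Homotopic₁ X a b) (hac : Homotopic₁ X a c) : Homotopic₂ X b c := by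
  obtain ⟨W₀, hm₀, ha₀, hb, hd₀₀, hd₀₁⟩ := hab
  obtain ⟨W₁, hm₁, ha₁, hc, hd₁₀, hd₁₁⟩ := hac
  set W : Bool → X.obj 2 := fun δ => cond δ W₁ W₀
  have hm : ∀ δ, X.marked (W δ) := fun δ => by cases δ <;> assumption
  have ha : ∀ δ, ∂[X, 1, false] (W δ) = a := fun δ => by cases δ <;> assumption
  have hside : ∀ δ δ', ∂[X, 2, δ'] (W δ) = σ[X, 1] (∂[X, 1, δ'] a) := fun δ δ' =>
    face_two_eq_degen_of_isDegenOne (ha δ) (by cases δ <;> cases δ' <;> assumption)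
  obtain ⟨x, hx, hxm⟩ := hX.exists_filler_three le_rfl (by norm_num)
    (isOpenBox_openBox₁ ha hside) (isMarkedOpenBox_openBox₁ hm hside)
  have hpair : ∀ δ, ∂[X, 2, δ] (∂[X, 1, true] x) = ∂[X, 1, true] (W δ) := fun δ =>
    (X.face_face x true δ le_rfl (by norm_num) le_rfl).symm.trans
      (by rw [hx 3 δ (by norm_num) le_rfl (by simp)]; rfl)
  have hdeg : ∀ δ, IsDegenOne X (∂[X, 1, δ] (∂[X, 1, true] x)) := fun δ =>
    ⟨∂[X, 1, δ] a, (X.face_face x true δ le_rfl one_lt_two (by norm_num)).symm.trans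
      (by rw [hx 2 δ (by norm_num) (by norm_num) (by simp)]; exact X.face_degen_degen 1 true _)⟩
  exact ⟨∂[X, 1, true] x, hxm, (hpair false).trans hb, (hpair true).trans hc, hdeg false,
    hdeg true⟩

theorem homotopic₂_of_homotopic₂_of_homotopic₂ (hX : IsComical X) {a b c : X.obj 1}
    (hab : Homotopic₂ X a b) (hac : Homotopic₂ X a c) : Homotopic₂ X b c := by
  obtain ⟨V₀, hm₀, ha₀, hb, hd₀₀, hd₀₁⟩ := hab
  obtain ⟨V₁, hm₁, ha₁, hc, hd₁₀, hd₁₁⟩ := hac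
  set V : Bool → X.obj 2 := fun δ => cond δ V₁ V₀
  have hm : ∀ δ, X.marked (V δ) := fun δ => by cases δ <;> assumption
  have ha : ∀ δ, ∂[X, 2, false] (V δ) = a := fun δ => by cases δ <;> assumption
  have hside : ∀ δ δ', ∂[X, 1, δ'] (V δ) = σ[X, 1] (∂[X, 1, δ'] a) := fun δ δ' =>
    face_one_eq_degen_of_isDegenOne (ha δ) (by cases δ <;> cases δ' <;> assumption)
  obtain ⟨x, hx, hxm⟩ := hX.exists_filler_three one_le_two (by norm_num)
    (isOpenBox_openBox₂ ha hside) (isMarkedOpenBox_openBox₂ hm hside)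
  have hpair : ∀ δ, ∂[X, 2, δ] (∂[X, 2, true] x) = ∂[X, 2, true] (V δ) := fun δ =>
    (X.face_face x true δ one_le_two (by norm_num) le_rfl).symm.trans
      (by rw [hx 3 δ (by norm_num) le_rfl (by simp)]; rfl)
  have hdeg : ∀ δ, IsDegenOne X (∂[X, 1, δ] (∂[X, 2, true] x)) := fun δ =>
    ⟨∂[X, 1, δ] a, (X.face_face x δ true le_rfl one_lt_two (by norm_num)).trans
      (by rw [hx 1 δ le_rfl (by norm_num) (by simp)]; exact X.face_degen_degen 1 true _)⟩
  exact ⟨∂[X, 2, true] x, hxm, (hpair false).trans hb, (hpair true).trans hc, hdeg false,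
    hdeg true⟩

end Euclidean

section Equivalence

variable {X : MCSet} {a b c : X.obj 1}

theorem Homotopic₂.symm (hX : IsComical X) (h : Homotopic₂ X a b) : Homotopic₂ X b a :=
  homotopic₂_of_homotopic₂_of_homotopic₂ hX h (.refl a)

theorem Homotopic₂.trans (hX : IsComical X) (hab : Homotopic₂ X a b) (hbc : Homotopic₂ X b c) :
    Homotopic₂ X a c :=
  homotopic₂_of_homotopic₂_of_homotopic₂ hX (hab.symm hX) hbc

theorem Homotopic₁.homotopic₂ (hX : IsComical X) (h : Homotopic₁ X a b) : Homotopic₂ X a b :=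
  homotopic₂_of_homotopic₁_of_homotopic₁ hX (.refl a) h

theorem Homotopic.homotopic₂ (hX : IsComical X) (h : Homotopic X a b) : Homotopic₂ X a b := by
  rcases homotopic_iff.1 h with h | h | h | h
  exacts [h.homotopic₂ hX, (h.homotopic₂ hX).symm hX, h, h.symm hX]

theorem Homotopic.trans (hX : IsComical X) (hab : Homotopic X a b) (hbc : Homotopic X b c) :
    Homotopic X a c :=
  homotopic_iff.2 (.inr (.inr (.inl ((hab.homotopic₂ hX).trans hX (hbc.homotopic₂ hX)))))

theorem IsComical.equivalence_homotopic (hX : IsComical X) : Equivalence (Homotopic X) :=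
  ⟨fun u => homotopic_iff.2 (.inl (.refl u)), Homotopic.symm, Homotopic.trans hX⟩

end Equivalence

/-- In a comical set, the homotopy relation on `1`-cubes with fixed endpoints `x`, `y`
is an equivalence relation. -/
theorem homotopic_equivalence (X : MCSet) (hX : IsComical X) (x y : X.obj 0) :
    Equivalence (fun f g : {u : X.obj 1 //
        X.map (face1 1 false) (face1_isBoxMap 1 false) u = x ∧
        X.map (face1 1 true) (face1_isBoxMap 1 true) u = y} =>
      Homotopic X f.1 g.1) :=
  hX.equivalence_homotopic.comap Subtype.val
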